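/- arXiv:2507.14464 — 4 statements merged into one kernel-verified Lean document; each statement's English description precedes it below -/
import Mathlib

section
/- Let A ∈ ℤ^{k×r} be an integer matrix with columns a_1, …, a_r ∈ ℤ^k, and let φ_A : ℝ[X_1,…,X_r] → ℝ[ℤ^k] be the ℝ-algebra homomorphism from the polynomial ring in r variables to the group algebra of ℤ^k sending X_j to the Laurent monomial with exponent vector a_j. Then the toric ideal I_A := ker φ_A is equal to the ideal generated by the set of binomials {X^u − X^v : u, v ∈ ℕ^r and A u = A v}, where X^u denotes the monomial ∏_j X_j^{u_j}. In particular, I_A is a binomial ideal. -/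
open MvPolynomial

/-!
The monomial map is the pushforward `mapDomain` of the group algebra of `ℕ^r` along the degree map
`u ↦ A u`, so it suffices that the kernel of pushing forward along any map `f` is spanned by the
differences `e_a - e_b` with `f a = f b`. Pick a representative `g a` of each fibre of `f`: then
`x - g_* x` is a combination of such differences, and `g_* x` factors through `f_* x = 0`.
-/

namespace AddMonoidAlgebra

section Ring

variable {R M N : Type*} [Ring R]

theorem ker_mapDomainLinearMap (f : M → N) :
    LinearMap.ker (mapDomainLinearMap R R f) =
      Submodule.span R {x | ∃ a b, f a = f b ∧ x = single a (1 : R) - single b 1} := by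
  refine le_antisymm (fun x hx => ?_) (Submodule.span_le.mpr ?_)
  · rcases isEmpty_or_nonempty M with hM | hM
    · simp [coeff_injective (Subsingleton.elim x.coeff 0)]
    set g : M → M := fun a => Function.invFun f (f a)
    have hfg : ∀ a, f (g a) = f a := fun a => Function.invFun_eq ⟨a, rfl⟩
    have hgx : mapDomainLinearMap R R g x = 0 := by
      rw [show g = Function.invFun f ∘ f from rfl, mapDomainLinearMap_comp, LinearMap.comp_apply,
        LinearMap.mem_ker.mp hx, map_zero]
    have hdiff : x - mapDomainLinearMap R R g x =
        x.coeff.sum fun a c => c • (single a 1 - single (g a) 1) := by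
      conv_lhs => rw [← sum_coeff_single x]
      simp only [map_finsuppSum, mapDomainLinearMap_single, smul_sub, smul_single, smul_eq_mul,
        mul_one]
      rw [Finsupp.sum_sub]
    rw [← sub_zero x, ← hgx, hdiff]
    exact Submodule.finsuppSum_mem _ _ _ _ fun a _ =>
      Submodule.smul_mem _ _ (Submodule.subset_span ⟨a, g a, (hfg a).symm, rfl⟩)
  · rintro _ ⟨a, b, h, rfl⟩
    simp [h]

end Ring

variable {R M N : Type*} [CommRing R] [AddMonoid M] [AddMonoid N]

theorem ker_mapDomainRingHom (f : M →+ N) :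
    RingHom.ker (mapDomainRingHom R f) =
      Ideal.span {x | ∃ a b, f a = f b ∧ x = single a (1 : R) - single b 1} := by
  refine le_antisymm (fun x hx => ?_) (Ideal.span_le.mpr fun x hx => ?_)
  · have hker : x ∈ LinearMap.ker (mapDomainLinearMap R R f) := hx
    rw [ker_mapDomainLinearMap] at hker
    exact Submodule.span_le_restrictScalars R _ _ hker
  · exact (ker_mapDomainLinearMap (R := R) f).ge (Submodule.subset_span hx)

end AddMonoidAlgebra

namespace MvPolynomial

theorem prod_X_pow_eq_monomial_equivFunOnFinite_symm {σ R : Type*} [CommSemiring R] [Fintype σ]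
    (u : σ → ℕ) :
    ∏ j, (X j : MvPolynomial σ R) ^ u j = monomial (Finsupp.equivFunOnFinite.symm u) 1 := by
  rw [monomial_eq, C_1, one_mul, Finsupp.prod_fintype _ _ fun _ => pow_zero _]
  rfl

variable {σ R M : Type*} [CommRing R] [AddCommMonoid M]

theorem aeval_single_one_eq_mapDomainAlgHom (a : σ → M) :
    aeval (fun j => AddMonoidAlgebra.single (a j) (1 : R)) =
      (AddMonoidAlgebra.mapDomainAlgHom R R (Finsupp.linearCombination ℕ a).toAddMonoidHom :
        MvPolynomial σ R →ₐ[R] AddMonoidAlgebra R M) := by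
  refine algHom_ext fun j => ?_
  rw [aeval_X, X, ← single_eq_monomial]
  simp

theorem ker_aeval_single_one (a : σ → M) :
    RingHom.ker (aeval (fun j => AddMonoidAlgebra.single (a j) (1 : R))) =
      Ideal.span {p | ∃ d d', Finsupp.linearCombination ℕ a d = Finsupp.linearCombination ℕ a d' ∧
        p = monomial d (1 : R) - monomial d' 1} := by
  rw [aeval_single_one_eq_mapDomainAlgHom]
  exact AddMonoidAlgebra.ker_mapDomainRingHom _

end MvPolynomial

theorem Matrix.linearCombination_cols_eq_mulVec {m n α : Type*} [Fintype n]
    [NonAssocSemiring α] (A : Matrix m n α) (d : n →₀ ℕ) :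
    Finsupp.linearCombination ℕ (fun j i => A i j) d = A.mulVec fun j => (d j : α) := by
  ext i
  simp [Finsupp.linearCombination_apply, Finsupp.sum_fintype, Matrix.mulVec_apply_eq_sum,
    Nat.cast_comm]

/-- **The toric ideal is generated by binomials.**
For an integer matrix `A ∈ ℤ^{k×r}`, the kernel of the monomial map
`φ_A : ℝ[X_1,…,X_r] → ℝ[ℤ^k]`, `X_j ↦` the basis element of the group algebra indexed by the
`j`-th column of `A`, equals the ideal generated by the binomials
`X^u − X^v` with `u, v ∈ ℕ^r` and `A u = A v`. -/
theorem toric_ideal_eq_span_binomials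
    {k r : ℕ} (A : Matrix (Fin k) (Fin r) ℤ)
    (φ : MvPolynomial (Fin r) ℝ →ₐ[ℝ] AddMonoidAlgebra ℝ (Fin k → ℤ))
    (hφ : φ = MvPolynomial.aeval
      (fun j => AddMonoidAlgebra.single (fun i => A i j) (1 : ℝ))) :
    RingHom.ker φ.toRingHom =
      Ideal.span {f : MvPolynomial (Fin r) ℝ |
        ∃ u v : Fin r → ℕ,
          A.mulVec (fun j => (u j : ℤ)) = A.mulVec (fun j => (v j : ℤ)) ∧
          f = (∏ j, (X j : MvPolynomial (Fin r) ℝ) ^ u j) - ∏ j, (X j) ^ v j} := by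
  subst hφ
  refine (ker_aeval_single_one (R := ℝ) fun j i => A i j).trans (congrArg Ideal.span ?_)
  ext f
  constructor
  · rintro ⟨d, d', h, rfl⟩
    refine ⟨d, d', ?_, ?_⟩
    · simpa only [Matrix.linearCombination_cols_eq_mulVec] using h
    · simp only [prod_X_pow_eq_monomial_equivFunOnFinite_symm, Finsupp.equivFunOnFinite_symm_coe]
  · rintro ⟨u, v, h, rfl⟩
    refine ⟨Finsupp.equivFunOnFinite.symm u, Finsupp.equivFunOnFinite.symm v, ?_, ?_⟩
    · simpa only [Matrix.linearCombination_cols_eq_mulVec, Finsupp.coe_equivFunOnFinite_symm] using h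
    · simp only [prod_X_pow_eq_monomial_equivFunOnFinite_symm]
end

section
/- (Fundamental theorem for Markov bases, Diaconis–Sturmfels.) Let A ∈ ℤ^{k×r} and let B ⊆ ker_ℤ A be a finite set of integer vectors. Then B is a Markov basis for A if and only if the set of binomials {X^{v⁺} − X^{v⁻} : v ∈ B}, where v⁺ and v⁻ denote the positive and negative parts of v (so v = v⁺ − v⁻ with v⁺, v⁻ ∈ ℕ^r of disjoint supports), is a generating set of the toric ideal I_A = ker φ_A. -/
/-!
The map `φ` sends `X^d` to the basis element `A d`, so `ker φ` is spanned over `ℝ` by the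
differences `X^d - X^{d'}` with `A d = A d'`, and a single move `d = m + v⁻ ⟶ d' = m + v⁺` turns
`X^{d'} - X^d` into the multiple `X^m (X^{v⁺} - X^{v⁻})` of a binomial of `B`. Hence the binomials
generate `ker φ` as soon as every fibre is connected by moves. Conversely, the linear map sending
`X^d` to the connected component of `d` kills every multiple of every binomial of `B`, so
`X^d - X^{d'}` can only lie in the ideal they generate when `d` and `d'` are connected.
-/

/-- `B` is a Markov basis for the integer matrix `A`: for every `u ∈ ℕ^r` and every `u'` in the
fibre `F(u) = {w ∈ ℕ^r : A w = A u}` there is a sequence of moves `v 0, …, v (L-1)` taken from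
`±B` connecting `u` to `u'` with all partial sums coordinatewise nonnegative. -/
def IsMarkovBasis {k r : ℕ} (A : Matrix (Fin k) (Fin r) ℤ)
    (B : Finset (Fin r → ℤ)) : Prop :=
  (∀ v ∈ B, A.mulVec v = 0) ∧
  ∀ u u' : Fin r → ℕ,
    A.mulVec (fun j => (u' j : ℤ)) = A.mulVec (fun j => (u j : ℤ)) →
    ∃ (L : ℕ) (v : ℕ → (Fin r → ℤ)),
      (∀ i < L, v i ∈ B ∨ -v i ∈ B) ∧
      (∀ j, (u' j : ℤ) = (u j : ℤ) + ∑ i ∈ Finset.range L, v i j) ∧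
      (∀ l ≤ L, ∀ j, 0 ≤ (u j : ℤ) + ∑ i ∈ Finset.range l, v i j)

theorem AddMonoidAlgebra.ker_mapDomainLinearMap_le_span {R M N : Type*} [Ring R] [Nonempty M]
    (f : M → N) :
    LinearMap.ker (mapDomainLinearMap R R f) ≤
      Submodule.span R {x | ∃ m m', f m = f m' ∧ x = single m 1 - single m' 1} := by
  intro x hx
  -- `g ∘ f` sends every point to a fixed representative of its fibre.
  set g := Function.invFun f
  have hfgf (m : M) : f (g (f m)) = f m := Function.invFun_eq ⟨m, rfl⟩
  suffices ∀ y, y - mapDomainLinearMap R R (g ∘ f) y ∈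
      Submodule.span R {x | ∃ m m', f m = f m' ∧ x = single m 1 - single m' 1} by
    simpa [mapDomainLinearMap_comp, LinearMap.mem_ker.1 hx] using this x
  intro y
  induction y using AddMonoidAlgebra.induction_linear with
  | zero => simp
  | add y z hy hz => simpa [add_sub_add_comm] using add_mem hy hz
  | single m c =>
    have : single m c - single (g (f m)) c = c • (single m (1 : R) - single (g (f m)) 1) := by
      simp [smul_sub]
    simpa [this] using Submodule.smul_mem _ c
      (Submodule.subset_span (s := {x | ∃ m m', f m = f m' ∧ x = single m (1 : R) - single m' 1})
        ⟨m, g (f m), (hfgf m).symm, rfl⟩)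

theorem map_eq_zero_of_mem_ideal_span {A M F : Type*} [Semiring A] [AddCommMonoid M]
    [FunLike F A M] [AddMonoidHomClass F A M] (L : F) {S : Set A}
    (hS : ∀ s ∈ S, ∀ p, L (p * s) = 0) {x : A} (hx : x ∈ Ideal.span S) : L x = 0 := by
  suffices ∀ p, L (p * x) = 0 by simpa using this 1
  induction hx using Submodule.span_induction with
  | mem s hs => exact hS s hs
  | zero => simp
  | add y z _ _ hy hz => intro p; simp [mul_add, hy, hz]
  | smul b y _ hy => intro p; simpa [mul_assoc] using hy (p * b)

theorem Finsupp.weight_equivFunOnFinite_symm {σ M : Type*} [Fintype σ] [AddCommMonoid M]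
    (a : σ → M) (n : σ → ℕ) :
    Finsupp.weight a (Finsupp.equivFunOnFinite.symm n) = ∑ j, n j • a j := by
  simp [Finsupp.weight_apply, Finsupp.sum_fintype]

namespace MvPolynomial

section MonomialMap

variable {σ G : Type*} [AddCommMonoid G] (a : σ → G)

theorem aeval_single_eq_mapDomainAlgHom {R : Type*} [CommSemiring R] :
    aeval (fun j => AddMonoidAlgebra.single (a j) (1 : R)) =
      AddMonoidAlgebra.mapDomainAlgHom R R (Finsupp.weight a) := by
  refine algHom_ext fun j => ?_
  rw [aeval_X, X, ← single_eq_monomial, AddMonoidAlgebra.mapDomainAlgHom_apply,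
    AddMonoidAlgebra.mapDomain_single, Finsupp.weight_single, one_smul]

theorem aeval_single_monomial {R : Type*} [CommSemiring R] (d : σ →₀ ℕ) (c : R) :
    aeval (fun j => AddMonoidAlgebra.single (a j) (1 : R)) (monomial d c) =
      AddMonoidAlgebra.single (Finsupp.weight a d) c := by
  simp [aeval_single_eq_mapDomainAlgHom, ← single_eq_monomial]

theorem ker_aeval_single_le {R : Type*} [CommRing R] {I : Ideal (MvPolynomial σ R)}
    (hI : ∀ d d', Finsupp.weight a d = Finsupp.weight a d' → monomial d 1 - monomial d' 1 ∈ I) :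
    RingHom.ker (aeval fun j => AddMonoidAlgebra.single (a j) (1 : R)) ≤ I := by
  intro p hp
  rw [RingHom.mem_ker, aeval_single_eq_mapDomainAlgHom] at hp
  refine Submodule.span_le (p := I.restrictScalars R).2 ?_
    (AddMonoidAlgebra.ker_mapDomainLinearMap_le_span _ hp)
  rintro _ ⟨d, d', hdd', rfl⟩
  simpa [single_eq_monomial] using hI d d' hdd'

end MonomialMap

theorem prod_X_pow_eq_monomial_equivFunOnFinite {σ R : Type*} [Fintype σ] [CommSemiring R]
    (n : σ → ℕ) :
    ∏ j, (X j : MvPolynomial σ R) ^ n j = monomial (Finsupp.equivFunOnFinite.symm n) 1 := by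
  rw [prod_X_pow]
  congr
  ext j
  simp [Finsupp.indicator_of_mem (Finset.mem_univ j)]

end MvPolynomial

open MvPolynomial

section Moves

variable {σ : Type*} (B : Set (σ → ℤ))

def IsMove (d d' : σ →₀ ℕ) : Prop :=
  ∃ v, (v ∈ B ∨ -v ∈ B) ∧ ∀ j, (d' j : ℤ) = d j + v j

instance : Std.Symm (IsMove B) :=
  ⟨fun _ _ ⟨v, hv, h⟩ => ⟨-v, by simpa [or_comm] using hv, fun j => by simp [h j]⟩⟩

theorem reflTransGen_isMove_iff [Finite σ] {d d' : σ →₀ ℕ} :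
    Relation.ReflTransGen (IsMove B) d d' ↔ ∃ (L : ℕ) (v : ℕ → σ → ℤ),
      (∀ i < L, v i ∈ B ∨ -v i ∈ B) ∧
      (∀ j, (d' j : ℤ) = d j + ∑ i ∈ Finset.range L, v i j) ∧
      ∀ l ≤ L, ∀ j, 0 ≤ (d j : ℤ) + ∑ i ∈ Finset.range l, v i j := by
  constructor
  · intro h
    induction h using Relation.ReflTransGen.head_induction_on with
    | refl => exact ⟨0, 0, by simp, by simp, fun l hl j => by simp [Nat.le_zero.1 hl]⟩
    | head hmove _ ih =>
      obtain ⟨w, hw, hstep⟩ := hmove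
      obtain ⟨L, v, hv, hsum, hnn⟩ := ih
      refine ⟨L + 1, fun i => Nat.casesOn i w v, ?_, fun j => ?_, ?_⟩
      · rintro (_ | i) hi
        exacts [hw, hv i (by omega)]
      · rw [Finset.sum_range_succ', hsum j, hstep j]
        dsimp only [Nat.rec_zero]
        ring
      · rintro (_ | l) hl j
        · simp
        · have := hnn l (by omega) j
          rw [hstep j] at this
          rw [Finset.sum_range_succ']
          dsimp only [Nat.rec_zero]
          linarith
  · rintro ⟨L, v, hv, hsum, hnn⟩
    induction L generalizing d v with
    | zero =>
      obtain rfl : d' = d := by ext j; simpa using hsum j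
      exact .refl
    | succ L ih =>
      set d₁ : σ →₀ ℕ := Finsupp.equivFunOnFinite.symm fun j => (d j + v 0 j).toNat
      have hd₁ (j : σ) : (d₁ j : ℤ) = d j + v 0 j := by
        simpa [d₁] using hnn 1 (by omega) j
      refine .head ⟨v 0, hv 0 (by omega), hd₁⟩ (ih (d := d₁) (v := fun i => v (i + 1))
        (fun i hi => hv _ (by omega)) (fun j => ?_) fun l hl j => ?_)
      · rw [hsum j, hd₁, Finset.sum_range_succ']
        ring
      · have := hnn (l + 1) (by omega) j
        rw [Finset.sum_range_succ'] at this
        rw [hd₁]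
        linarith

end Moves

section MovesIdeal

variable {σ R : Type*} [Fintype σ] [CommRing R] {B : Set (σ → ℤ)}

noncomputable def toricBinomial (v : σ → ℤ) : MvPolynomial σ R :=
  ∏ j, X j ^ (v j).toNat - ∏ j, X j ^ (-(v j)).toNat

theorem toricBinomial_eq (v : σ → ℤ) :
    (toricBinomial v : MvPolynomial σ R) =
      monomial (Finsupp.equivFunOnFinite.symm fun j => (v j).toNat) 1 -
        monomial (Finsupp.equivFunOnFinite.symm fun j => (-(v j)).toNat) 1 := by
  simp only [toricBinomial, prod_X_pow_eq_monomial_equivFunOnFinite]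

theorem toricBinomial_neg (v : σ → ℤ) :
    (toricBinomial (-v) : MvPolynomial σ R) = -toricBinomial v := by
  simp [toricBinomial]

theorem monomial_sub_monomial_eq_mul_toricBinomial {d d' : σ →₀ ℕ} {v : σ → ℤ}
    (h : ∀ j, (d' j : ℤ) = d j + v j) :
    (monomial d' 1 - monomial d 1 : MvPolynomial σ R) =
      monomial (d ⊓ d') 1 * toricBinomial v := by
  rw [toricBinomial_eq, mul_sub, monomial_mul, monomial_mul, one_mul]
  congr 3 <;> ext j <;> simp <;> grind

theorem monomial_sub_monomial_mem_span_of_eqvGen {d d' : σ →₀ ℕ}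
    (h : Relation.EqvGen (IsMove B) d d') :
    (monomial d' 1 - monomial d 1 : MvPolynomial σ R) ∈ Ideal.span (toricBinomial '' B) := by
  induction h with
  | rel d d' hmove =>
    obtain ⟨v, hv | hv, h⟩ := hmove
    · rw [monomial_sub_monomial_eq_mul_toricBinomial h]
      exact Ideal.mul_mem_left _ _ (Ideal.subset_span ⟨v, hv, rfl⟩)
    · rw [monomial_sub_monomial_eq_mul_toricBinomial h, ← neg_neg v, toricBinomial_neg, mul_neg]
      exact neg_mem (Ideal.mul_mem_left _ _ (Ideal.subset_span ⟨-v, hv, rfl⟩))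
  | refl => simp
  | symm d d' _ ih => simpa using neg_mem ih
  | trans d₁ d₂ d₃ _ _ ih₁₂ ih₂₃ => simpa using add_mem ih₂₃ ih₁₂

theorem mapDomainLinearMap_mul_toricBinomial_eq_zero {v : σ → ℤ} (hv : v ∈ B)
    (p : MvPolynomial σ R) :
    AddMonoidAlgebra.mapDomainLinearMap R R (Quotient.mk (Relation.EqvGen.setoid (IsMove B)))
      (p * toricBinomial v) = 0 := by
  induction p using MvPolynomial.induction_on' with
  | monomial m c =>
    have : Relation.EqvGen (IsMove B)
        (m + Finsupp.equivFunOnFinite.symm fun j => (v j).toNat)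
        (m + Finsupp.equivFunOnFinite.symm fun j => (-(v j)).toNat) :=
      .rel _ _ ⟨-v, .inr (by simpa using hv), fun j => by simp; grind⟩
    rw [toricBinomial_eq, mul_sub, monomial_mul, monomial_mul, mul_one, ← single_eq_monomial,
      ← single_eq_monomial, map_sub, AddMonoidAlgebra.mapDomainLinearMap_single,
      AddMonoidAlgebra.mapDomainLinearMap_single, Quotient.sound this, sub_self]
  | add p q hp hq => rw [add_mul, map_add, hp, hq, add_zero]

theorem eqvGen_of_monomial_sub_monomial_mem_span [Nontrivial R] {d d' : σ →₀ ℕ}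
    (h : (monomial d' 1 - monomial d 1 : MvPolynomial σ R) ∈ Ideal.span (toricBinomial '' B)) :
    Relation.EqvGen (IsMove B) d d' := by
  have := map_eq_zero_of_mem_ideal_span
    (AddMonoidAlgebra.mapDomainLinearMap R R (Quotient.mk (Relation.EqvGen.setoid (IsMove B))))
    (by rintro _ ⟨v, hv, rfl⟩ p; exact mapDomainLinearMap_mul_toricBinomial_eq_zero hv p) h
  rw [← single_eq_monomial, ← single_eq_monomial, map_sub,
    AddMonoidAlgebra.mapDomainLinearMap_single, AddMonoidAlgebra.mapDomainLinearMap_single,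
    sub_eq_zero, AddMonoidAlgebra.single_left_inj one_ne_zero] at this
  exact Relation.EqvGen.symm _ _ (Quotient.exact this)

end MovesIdeal

section FundamentalTheorem

variable {σ R G : Type*} [Fintype σ] [CommRing R] [Nontrivial R] [AddCommGroup G]

theorem toricBinomial_mem_ker_aeval_single_iff (a : σ → G) (v : σ → ℤ) :
    (toricBinomial v : MvPolynomial σ R) ∈
        RingHom.ker (aeval fun j => AddMonoidAlgebra.single (a j) (1 : R)) ↔
      ∑ j, v j • a j = 0 := by
  rw [RingHom.mem_ker, toricBinomial_eq, map_sub, aeval_single_monomial, aeval_single_monomial,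
    sub_eq_zero, AddMonoidAlgebra.single_left_inj one_ne_zero,
    Finsupp.weight_equivFunOnFinite_symm, Finsupp.weight_equivFunOnFinite_symm, ← sub_eq_zero,
    ← Finset.sum_sub_distrib]
  refine Eq.congr_left (Finset.sum_congr rfl fun j _ => ?_)
  rw [← natCast_zsmul, ← natCast_zsmul, ← sub_smul, Int.toNat_sub_toNat_neg]

theorem span_toricBinomial_eq_ker_aeval_single_iff (a : σ → G) (B : Set (σ → ℤ)) :
    Ideal.span (toricBinomial '' B : Set (MvPolynomial σ R)) =
        RingHom.ker (aeval fun j => AddMonoidAlgebra.single (a j) (1 : R)) ↔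
      (∀ v ∈ B, ∑ j, v j • a j = 0) ∧
        ∀ d d', Finsupp.weight a d = Finsupp.weight a d' → Relation.EqvGen (IsMove B) d d' := by
  constructor
  · intro h
    refine ⟨fun v hv => (toricBinomial_mem_ker_aeval_single_iff a v).1
        (h ▸ Ideal.subset_span (Set.mem_image_of_mem _ hv)),
      fun d d' hdd' => eqvGen_of_monomial_sub_monomial_mem_span (R := R) ?_⟩
    rw [h, RingHom.mem_ker, map_sub, aeval_single_monomial, aeval_single_monomial, hdd', sub_self]
  · rintro ⟨hB, hfibre⟩
    refine le_antisymm (Ideal.span_le.2 ?_) (ker_aeval_single_le a fun d d' hdd' => ?_)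
    · rintro _ ⟨v, hv, rfl⟩
      exact (toricBinomial_mem_ker_aeval_single_iff a v).2 (hB v hv)
    · exact monomial_sub_monomial_mem_span_of_eqvGen (hfibre d' d hdd'.symm)

end FundamentalTheorem

theorem Matrix.sum_zsmul_col_eq_mulVec {m n : Type*} [Fintype n] (A : Matrix m n ℤ)
    (v : n → ℤ) : ∑ j, v j • (fun i => A i j) = A.mulVec v := by
  ext i
  simp [Matrix.mulVec, dotProduct, Finset.sum_apply, mul_comm]

theorem Matrix.weight_col_eq_mulVec {m n : Type*} [Fintype n] (A : Matrix m n ℤ) (d : n →₀ ℕ) :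
    Finsupp.weight (fun j i => A i j) d = A.mulVec fun j => (d j : ℤ) := by
  rw [← Finsupp.equivFunOnFinite_symm_coe d, Finsupp.weight_equivFunOnFinite_symm,
    Finsupp.equivFunOnFinite_symm_coe, ← Matrix.sum_zsmul_col_eq_mulVec]
  simp

theorem isMarkovBasis_iff_eqvGen {k r : ℕ} (A : Matrix (Fin k) (Fin r) ℤ)
    (B : Finset (Fin r → ℤ)) :
    IsMarkovBasis A B ↔ (∀ v ∈ B, A.mulVec v = 0) ∧
      ∀ d d' : Fin r →₀ ℕ, A.mulVec (fun j => (d j : ℤ)) = A.mulVec (fun j => (d' j : ℤ)) →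
        Relation.EqvGen (IsMove (B : Set (Fin r → ℤ))) d d' := by
  simp only [IsMarkovBasis, Relation.EqvGen.eqvGen_eq_reflTransGen, reflTransGen_isMove_iff,
    Finset.mem_coe]
  refine and_congr_right fun _ => ⟨fun h d d' hdd' => h d d' hdd'.symm, fun h u u' hA => ?_⟩
  simpa using h (Finsupp.equivFunOnFinite.symm u) (Finsupp.equivFunOnFinite.symm u') hA.symm

theorem isMarkovBasis_iff_binomials_generate_toric_ideal_general
    {k r : ℕ} (A : Matrix (Fin k) (Fin r) ℤ)
    (B : Finset (Fin r → ℤ))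
    (φ : MvPolynomial (Fin r) ℝ →ₐ[ℝ] AddMonoidAlgebra ℝ (Fin k → ℤ))
    (hφ : φ = MvPolynomial.aeval
      (fun j => AddMonoidAlgebra.single (fun i => A i j) (1 : ℝ))) :
    IsMarkovBasis A B ↔
      Ideal.span {f : MvPolynomial (Fin r) ℝ |
          ∃ v ∈ B, f = (∏ j, (X j : MvPolynomial (Fin r) ℝ) ^ (v j).toNat)
            - ∏ j, (X j) ^ (-(v j)).toNat} = RingHom.ker φ.toRingHom := by
  subst hφ
  have hgen : {f : MvPolynomial (Fin r) ℝ | ∃ v ∈ B,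
      f = (∏ j, (X j : MvPolynomial (Fin r) ℝ) ^ (v j).toNat) - ∏ j, (X j) ^ (-(v j)).toNat} =
      toricBinomial '' (B : Set (Fin r → ℤ)) := by
    ext f
    simp [toricBinomial, eq_comm]
  rw [hgen, AlgHom.toRingHom_eq_coe, RingHom.ker_coe_toRingHom,
    span_toricBinomial_eq_ker_aeval_single_iff, isMarkovBasis_iff_eqvGen]
  simp only [Matrix.sum_zsmul_col_eq_mulVec, Matrix.weight_col_eq_mulVec, Finset.mem_coe]

/-- **Fundamental theorem for Markov bases (Diaconis–Sturmfels).**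
A finite set `B ⊆ ker_ℤ A` is a Markov basis for `A` if and only if the binomials
`X^{v⁺} − X^{v⁻}`, `v ∈ B`, generate the toric ideal `I_A = ker φ_A`. -/
theorem isMarkovBasis_iff_binomials_generate_toric_ideal
    {k r : ℕ} (A : Matrix (Fin k) (Fin r) ℤ)
    (B : Finset (Fin r → ℤ)) (hB : ∀ v ∈ B, A.mulVec v = 0)
    (φ : MvPolynomial (Fin r) ℝ →ₐ[ℝ] AddMonoidAlgebra ℝ (Fin k → ℤ))
    (hφ : φ = MvPolynomial.aeval
      (fun j => AddMonoidAlgebra.single (fun i => A i j) (1 : ℝ))) :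
    IsMarkovBasis A B ↔
      Ideal.span {f : MvPolynomial (Fin r) ℝ |
          ∃ v ∈ B, f = (∏ j, (X j : MvPolynomial (Fin r) ℝ) ^ (v j).toNat)
            - ∏ j, (X j) ^ (-(v j)).toNat} = RingHom.ker φ.toRingHom :=
  isMarkovBasis_iff_binomials_generate_toric_ideal_general A B φ hφ
end

section
/- For every integer matrix A ∈ ℤ^{k×r} there exists a finite Markov basis for A. -/
open Matrix Relation

section MarkovStep

variable {ι : Type*}

def MarkovStep (B : Set (ι → ℤ)) (x y : ι → ℕ) : Prop :=
  ∃ v ∈ B, ∀ j, (y j : ℤ) = x j + v j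

theorem exists_markov_path_of_reflTransGen {B : Set (ι → ℤ)} {u u' : ι → ℕ}
    (h : ReflTransGen (MarkovStep B) u u') :
    ∃ (L : ℕ) (v : ℕ → ι → ℤ),
      (∀ i < L, v i ∈ B ∨ -v i ∈ B) ∧
      (∀ j, (u' j : ℤ) = u j + ∑ i ∈ Finset.range L, v i j) ∧
      (∀ l ≤ L, ∀ j, 0 ≤ (u j : ℤ) + ∑ i ∈ Finset.range l, v i j) := by
  induction h using ReflTransGen.head_induction_on with
  | refl => exact ⟨0, 0, by simp, by simp, by simp⟩
  | head hxy _ ih =>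
    obtain ⟨w, hwB, hw⟩ := hxy
    obtain ⟨L, v, hvB, hv, hv_nonneg⟩ := ih
    have hsum (l : ℕ) (j : ι) : ∑ i ∈ Finset.range (l + 1), (Nat.casesOn i w v : ι → ℤ) j =
        ∑ i ∈ Finset.range l, v i j + w j :=
      Finset.sum_range_succ' _ _
    refine ⟨L + 1, fun i => Nat.casesOn i w v, ?_, fun j => ?_, ?_⟩
    · rintro (_ | i) hi
      exacts [.inl hwB, hvB i (by omega)]
    · rw [hsum, hv j, hw j]
      ring
    · rintro (_ | l) hl j
      · simp
      · rw [hsum]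
        linarith [hv_nonneg l (by omega) j, hw j]

end MarkovStep

section Graver

variable {ι κ : Type*}

/-- `conformalParts w ≤ conformalParts v` is the conformal order on integer vectors. -/
def conformalParts (v : ι → ℤ) : ι ⊕ ι → ℕ :=
  Sum.elim (fun j => (v j).toNat) (fun j => (-v j).toNat)

theorem conformalParts_injective : Function.Injective (conformalParts (ι := ι)) := by
  intro v w h
  funext j
  have hpos := congrFun h (.inl j)
  have hneg := congrFun h (.inr j)
  simp only [conformalParts, Sum.elim_inl, Sum.elim_inr] at hpos hneg
  omega

theorem conformalParts_le_iff {v w : ι → ℤ} :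
    conformalParts w ≤ conformalParts v ↔
      ∀ j, (w j).toNat ≤ (v j).toNat ∧ (-w j).toNat ≤ (-v j).toNat := by
  simp only [Pi.le_def, Sum.forall, conformalParts, Sum.elim_inl, Sum.elim_inr, forall_and]

variable [Fintype ι]

def graverBasis (A : Matrix κ ι ℤ) : Set (ι → ℤ) :=
  conformalParts ⁻¹' {p | Minimal (· ∈ conformalParts '' {v | A *ᵥ v = 0 ∧ v ≠ 0}) p}

theorem graverBasis_finite (A : Matrix κ ι ℤ) : (graverBasis A).Finite :=
  (WellQuasiOrderedLE.finite_of_isAntichain (setOfPred_minimal_antichain _)).preimage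
    conformalParts_injective.injOn

theorem mulVec_eq_zero_of_mem_graverBasis {A : Matrix κ ι ℤ} {v : ι → ℤ}
    (hv : v ∈ graverBasis A) : A *ᵥ v = 0 := by
  obtain ⟨w, hw, hwv⟩ := hv.prop
  exact conformalParts_injective hwv ▸ hw.1

theorem ne_zero_of_mem_graverBasis {A : Matrix κ ι ℤ} {v : ι → ℤ}
    (hv : v ∈ graverBasis A) : v ≠ 0 := by
  obtain ⟨w, hw, hwv⟩ := hv.prop
  exact conformalParts_injective hwv ▸ hw.2

theorem exists_mem_graverBasis_conformalParts_le {A : Matrix κ ι ℤ} {v : ι → ℤ}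
    (hv : A *ᵥ v = 0) (hv0 : v ≠ 0) :
    ∃ w ∈ graverBasis A, conformalParts w ≤ conformalParts v := by
  obtain ⟨p, hpv, hp⟩ := exists_minimal_le_of_wellFoundedLT
    (· ∈ conformalParts '' {v | A *ᵥ v = 0 ∧ v ≠ 0}) _ ⟨v, ⟨hv, hv0⟩, rfl⟩
  obtain ⟨w, -, rfl⟩ := hp.prop
  exact ⟨w, hp, hpv⟩

theorem reflTransGen_markovStep_graverBasis (A : Matrix κ ι ℤ)
    {u u' : ι → ℕ} (h : A *ᵥ (fun j => (u' j : ℤ)) = A *ᵥ (fun j => (u j : ℤ))) :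
    ReflTransGen (MarkovStep (graverBasis A)) u u' := by
  induction hn : ∑ j, ((u' j : ℤ) - u j).natAbs using Nat.strong_induction_on
    generalizing u with
  | _ n ih =>
  set d : ι → ℤ := fun j => (u' j : ℤ) - u j
  have hd_apply (j : ι) : d j = (u' j : ℤ) - u j := rfl
  by_cases hd0 : d = 0
  · obtain rfl : u = u' := funext fun j => by
      have := congrFun hd0 j
      rw [hd_apply, Pi.zero_apply] at this
      omega
    exact .refl
  have hd : A *ᵥ d = 0 := by
    rw [show d = (fun j => (u' j : ℤ)) - fun j => (u j : ℤ) from rfl, mulVec_sub, h, sub_self]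
  obtain ⟨w, hwB, hwd⟩ := exists_mem_graverBasis_conformalParts_le hd hd0
  have hw := conformalParts_le_iff.1 hwd
  have hw_nonneg (j : ι) : 0 ≤ (u j : ℤ) + w j := by have := hw j; have := hd_apply j; omega
  set u₂ : ι → ℕ := fun j => ((u j : ℤ) + w j).toNat
  have hu₂ (j : ι) : (u₂ j : ℤ) = u j + w j := Int.toNat_of_nonneg (hw_nonneg j)
  -- `w` and `d` have the same signs, so moving by `w` shortens the distance by `|w|`
  have hdist (j : ι) : ((u' j : ℤ) - u₂ j).natAbs + (w j).natAbs = (d j).natAbs := by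
    have := hw j; have := hu₂ j; have := hd_apply j; omega
  have hw_pos : 0 < ∑ j, (w j).natAbs := by
    obtain ⟨j, hj⟩ := Function.ne_iff.1 (ne_zero_of_mem_graverBasis hwB)
    exact Finset.sum_pos' (fun _ _ => Nat.zero_le _) ⟨j, Finset.mem_univ j, Int.natAbs_pos.2 hj⟩
  refine .head ⟨w, hwB, hu₂⟩ (ih _ ?_ ?_ rfl)
  · rw [← hn, ← Finset.sum_congr rfl fun j _ => hdist j, Finset.sum_add_distrib]
    omega
  · rw [show (fun j => (u₂ j : ℤ)) = (fun j => (u j : ℤ)) + w from funext hu₂, mulVec_add,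
      mulVec_eq_zero_of_mem_graverBasis hwB, add_zero, h]

end Graver

/-- **Existence of Markov bases.** Every integer matrix `A ∈ ℤ^{k×r}` admits a finite
Markov basis. -/
theorem exists_finite_markov_basis {k r : ℕ} (A : Matrix (Fin k) (Fin r) ℤ) :
    ∃ B : Finset (Fin r → ℤ), IsMarkovBasis A B := by
  refine ⟨(graverBasis_finite A).toFinset, fun v hv => ?_, fun u u' h => ?_⟩
  · exact mulVec_eq_zero_of_mem_graverBasis ((graverBasis_finite A).mem_toFinset.1 hv)
  · simpa using exists_markov_path_of_reflTransGen (reflTransGen_markovStep_graverBasis A h)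
end

section
/- (Fisher's combination under the null.) Let N ≥ 1 and let p_1, …, p_N be independent random variables, each uniformly distributed on (0,1). Then the statistic T = −2 Σ_{i=1}^{N} log p_i has the chi-squared distribution with 2N degrees of freedom; equivalently, the pushforward of the N-fold product of the uniform measure on (0,1) under the map x ↦ −2 Σ_{i=1}^N log x_i equals the Gamma distribution with shape parameter N and rate parameter 1/2. -/
/-!
If `U` is uniform on `(0,1)` then `P(-2 log U ≤ t) = P(U ≥ e^{-t/2}) = 1 - e^{-t/2}`, so each
`-2 log pᵢ` is exponential with rate `1/2`, i.e. `Γ(1, 1/2)`. By independence the law of the sum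
is the convolution of these laws, and `Γ(a, r) ∗ Γ(1, r) = Γ(a + 1, r)`: at `t ≥ 0` the
convolution density is `r^{a+1} e^{-rt} / Γ(a) · ∫₀ᵗ y^{a-1} dy = r^{a+1} t^a e^{-rt} / Γ(a+1)`.
-/

open MeasureTheory ProbabilityTheory Real Set

lemma map_pi_sum_fin_succ_eq_conv {α M : Type*} [MeasurableSpace α] [AddCommMonoid M]
    [MeasurableSpace M] [MeasurableAdd₂ M] (μ : Measure α) [SigmaFinite μ] {f : α → M}
    (hf : Measurable f) (n : ℕ) :
    (Measure.pi fun _ : Fin (n + 1) => μ).map (fun x => ∑ i, f (x i)) =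
      μ.map f ∗ (Measure.pi fun _ : Fin n => μ).map (fun x => ∑ i, f (x i)) := by
  have hsum : Measurable fun x : Fin n → α => ∑ i, f (x i) := by fun_prop
  have hsplit : (fun x : Fin (n + 1) → α => ∑ i, f (x i)) =
      (fun p : M × M => p.1 + p.2) ∘ Prod.map f (fun x : Fin n → α => ∑ i, f (x i)) ∘
        MeasurableEquiv.piFinSuccAbove (fun _ => α) 0 := by
    funext x
    simp [Fin.sum_univ_succ, Fin.tail]
  rw [hsplit, ← Measure.map_map (by fun_prop) (by fun_prop),
    ← Measure.map_map (by fun_prop) (by fun_prop),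
    (measurePreserving_piFinSuccAbove (fun _ => μ) 0).map_eq, ← Measure.map_prod_map _ _ hf hsum]
  rfl

lemma map_neg_mul_log_restrict_Ioo_eq_expMeasure {c : ℝ} (hc : 0 < c) :
    (volume.restrict (Ioo (0 : ℝ) 1)).map (fun x => -c * log x) = expMeasure c⁻¹ := by
  have hmeas : Measurable fun x : ℝ => -c * log x := by fun_prop
  have : IsProbabilityMeasure (volume.restrict (Ioo (0 : ℝ) 1)) := ⟨by simp⟩
  have : IsProbabilityMeasure (expMeasure c⁻¹) := isProbabilityMeasure_expMeasure (by positivity)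
  have : IsProbabilityMeasure ((volume.restrict (Ioo (0 : ℝ) 1)).map (fun x => -c * log x)) :=
    Measure.isProbabilityMeasure_map hmeas.aemeasurable
  refine Measure.ext_of_Iic _ _ fun t => ?_
  have hpre : (fun x => -c * log x) ⁻¹' Iic t ∩ Ioo 0 1 = Ico (exp (-(c⁻¹ * t))) 1 := by
    have hlog (y : ℝ) : -c * y ≤ t ↔ -(c⁻¹ * t) ≤ y := by
      rw [neg_le, ← div_eq_inv_mul, le_div_iff₀ hc]
      constructor <;> intro h <;> linarith
    ext x
    simp only [mem_inter_iff, mem_preimage, mem_Iic, mem_Ioo, mem_Ico, hlog]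
    constructor
    · rintro ⟨hle, hx0, hx1⟩
      exact ⟨(le_log_iff_exp_le hx0).1 hle, hx1⟩
    · rintro ⟨hle, hx1⟩
      have hx0 : 0 < x := (exp_pos _).trans_le hle
      exact ⟨(le_log_iff_exp_le hx0).2 hle, hx0, hx1⟩
  rw [Measure.map_apply hmeas measurableSet_Iic, Measure.restrict_apply (hmeas measurableSet_Iic),
    hpre, Real.volume_Ico, ← ofReal_cdf, cdf_expMeasure_eq (by positivity)]
  split_ifs with ht
  · rfl
  · rw [ENNReal.ofReal_zero]
    exact ENNReal.ofReal_of_nonpos (sub_nonpos.2 (one_le_exp (by nlinarith [inv_pos.2 hc])))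

lemma gammaPDF_lconvolution_gammaPDF_one {a r : ℝ} (ha : 0 < a) (hr : 0 < r) :
    gammaPDF a r ⋆ₗ gammaPDF 1 r = gammaPDF (a + 1) r := by
  ext t
  set C := r ^ (a + 1) / Gamma a * exp (-(r * t)) with hC
  have hC0 : 0 ≤ C := by have := Gamma_pos_of_pos ha; positivity
  have hprod (y : ℝ) : gammaPDF a r y * gammaPDF 1 r (-y + t) =
      (Icc 0 t).indicator (fun y => ENNReal.ofReal (C * y ^ (a - 1))) y := by
    by_cases hy : y ∈ Icc 0 t
    · rw [indicator_of_mem hy, gammaPDF_of_nonneg hy.1, gammaPDF_of_nonneg (by linarith [hy.2]),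
        ← ENNReal.ofReal_mul (by have := rpow_nonneg hy.1 (a - 1); positivity)]
      congr 1
      have hexp : exp (-(r * y)) * exp (-(r * (-y + t))) = exp (-(r * t)) := by
        rw [← exp_add]; ring_nf
      rw [hC, rpow_add_one hr.ne', ← hexp, Gamma_one, rpow_one, sub_self, rpow_zero]
      ring
    · rw [indicator_of_notMem hy]
      rcases not_and_or.1 hy with hy | hy
      · rw [gammaPDF_of_neg (not_le.1 hy), zero_mul]
      · rw [gammaPDF_of_neg (x := -y + t) (by linarith [not_le.1 hy]), mul_zero]
  rw [lconvolution_def, lintegral_congr hprod, lintegral_indicator measurableSet_Icc]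
  rcases lt_or_ge t 0 with ht | ht
  · rw [Icc_eq_empty (by linarith), Measure.restrict_empty, lintegral_zero_measure,
      gammaPDF_of_neg ht]
  have hint : IntegrableOn (fun y => C * y ^ (a - 1)) (Icc 0 t) :=
    (intervalIntegrable_iff_integrableOn_Icc_of_le ht).1
      ((intervalIntegral.intervalIntegrable_rpow' (by linarith)).const_mul C)
  have hnonneg : 0 ≤ᵐ[volume.restrict (Icc 0 t)] fun y => C * y ^ (a - 1) :=
    (ae_restrict_iff' measurableSet_Icc).2 (ae_of_all _ fun y hy =>
      mul_nonneg hC0 (rpow_nonneg hy.1 _))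
  rw [← ofReal_integral_eq_lintegral_ofReal hint hnonneg, integral_const_mul,
    integral_Icc_eq_integral_Ioc, ← intervalIntegral.integral_of_le ht,
    integral_rpow (by left; linarith), gammaPDF_of_nonneg ht, sub_add_cancel, add_sub_cancel_right,
    zero_rpow ha.ne', sub_zero, Gamma_add_one ha.ne', hC]
  congr 1
  field_simp

lemma gammaMeasure_conv_gammaMeasure_one {a r : ℝ} (ha : 0 < a) (hr : 0 < r) :
    gammaMeasure a r ∗ gammaMeasure 1 r = gammaMeasure (a + 1) r := by
  have hmeas (b : ℝ) : Measurable (gammaPDF b r) := (measurable_gammaPDFReal b r).ennreal_ofReal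
  rw [gammaMeasure, gammaMeasure, conv_withDensity_eq_lconvolution (hmeas a) (hmeas 1),
    gammaPDF_lconvolution_gammaPDF_one ha hr]
  rfl

/-- **Fisher's combination under the null.**
If `p_1, …, p_N` are i.i.d. uniform on `(0,1)`, then `T = −2 ∑ log p_i` is chi-squared with
`2N` degrees of freedom: the pushforward of the `N`-fold product of the uniform measure on
`(0,1)` under `x ↦ −2 ∑ᵢ log xᵢ` is the Gamma distribution with shape `N` and rate `1/2`. -/
theorem fisher_combination_chi_squared (N : ℕ) (hN : 1 ≤ N) :
    Measure.map (fun x : Fin N → ℝ => -2 * ∑ i, Real.log (x i))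
      (Measure.pi fun _ : Fin N => volume.restrict (Set.Ioo (0 : ℝ) 1)) =
      gammaMeasure N (1 / 2) := by
  have hexp : (volume.restrict (Ioo (0 : ℝ) 1)).map (fun x => -2 * log x) =
      gammaMeasure 1 (1 / 2) := by
    rw [map_neg_mul_log_restrict_Ioo_eq_expMeasure two_pos, one_div]; rfl
  have hf : Measurable fun x : ℝ => -2 * log x := by fun_prop
  simp_rw [Finset.mul_sum]
  induction N, hN using Nat.le_induction with
  | base =>
    rw [map_pi_sum_fin_succ_eq_conv _ hf, Measure.pi_of_empty, Measure.map_dirac' (by fun_prop)]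
    simp only [Finset.univ_eq_empty, Finset.sum_empty, Measure.conv_dirac_zero]
    rw [hexp, Nat.cast_one]
  | succ n hn ih =>
    rw [map_pi_sum_fin_succ_eq_conv _ hf, Measure.conv_comm, ih, hexp,
      gammaMeasure_conv_gammaMeasure_one (by positivity) one_half_pos]
    push_cast; rfl
end
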